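/- For every ħ>0 and every integer n≥1, the eigenvalues satisfy the interlacing bounds ℰ_{n−1;ħ} < E_{n;ħ} < ℰ_{n+1;ħ}. -/

import Mathlib

open Real Set

/-!
By the reflection formula, `1/Γ(3/4 - z) = Γ(1/4 + z) cos φ / π` and
`-1/Γ(1/4 - z) = Γ(3/4 + z) sin φ / π` with `φ = πz - π/4`, so the vector whose polar angle is
`θ(z)` has positive inner product with `(cos φ, sin φ)`: `cos (θ(z) - φ) > 0` for all `z ≥ 0`.
As `θ(0) - φ(0) = -π/4`, continuity traps `θ(z) - φ(z)` in `(-π/2, π/2)`. Substituting this into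
the quantization condition gives `2πħ(n - 1/2) < S(E_{n;ħ}) < 2πħ(n + 3/2)`, and these bounds are
`S(ℰ_{n-1;ħ})` and `S(ℰ_{n+1;ħ})`; monotonicity of `S` finishes the proof.
-/

theorem Real.inv_Gamma_eq_Gamma_one_sub_mul_sin {s : ℝ} (hs : s < 1) :
    (Gamma s)⁻¹ = Gamma (1 - s) * sin (π * s) / π := by
  by_cases hΓ : Gamma s = 0
  · obtain ⟨k, rfl⟩ := (Gamma_eq_zero_iff s).mp hΓ
    have hsin : sin (π * k) = 0 := by simpa [mul_comm] using sin_nat_mul_pi k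
    simp [hΓ, hsin]
  · have hreflect := Gamma_mul_Gamma_one_sub s
    have hΓ' : 0 < Gamma (1 - s) := Gamma_pos_of_pos (by linarith)
    have hsin : sin (π * s) ≠ 0 := fun h => by
      rw [h, div_zero] at hreflect
      exact mul_ne_zero hΓ hΓ'.ne' hreflect
    field_simp
    rw [hreflect]
    field_simp

theorem Real.inv_Gamma_three_div_four_sub {z : ℝ} (hz : -(1 / 4) < z) :
    (Gamma (3 / 4 - z))⁻¹ = Gamma (1 / 4 + z) * cos (π * z - π / 4) / π := by
  rw [inv_Gamma_eq_Gamma_one_sub_mul_sin (by linarith), ← sin_pi_div_two_sub]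
  ring_nf

theorem Real.inv_Gamma_one_div_four_sub {z : ℝ} (hz : -(3 / 4) < z) :
    (Gamma (1 / 4 - z))⁻¹ = -(Gamma (3 / 4 + z) * sin (π * z - π / 4) / π) := by
  rw [inv_Gamma_eq_Gamma_one_sub_mul_sin (by linarith), ← neg_div, ← mul_neg, ← sin_neg]
  ring_nf

theorem cos_sub_pos_of_polar {r θ φ a b : ℝ} (hr : 0 < r) (ha : r * cos θ = a)
    (hb : r * sin θ = b) (h : 0 < a * cos φ + b * sin φ) : 0 < cos (θ - φ) := by
  refine pos_of_mul_pos_right (a := r) ?_ hr.le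
  rwa [cos_sub, mul_add, ← mul_assoc, ← mul_assoc, ha, hb]

theorem inner_phase_pos {z : ℝ} (hz : 0 ≤ z) :
    0 < √z * (Gamma (3 / 4 - z))⁻¹ * cos (π * z - π / 4)
      + -(Gamma (1 / 4 - z))⁻¹ * sin (π * z - π / 4) := by
  rw [inv_Gamma_three_div_four_sub (by linarith), inv_Gamma_one_div_four_sub (by linarith)]
  set φ := π * z - π / 4
  have hB : 0 < Gamma (3 / 4 + z) := Gamma_pos_of_pos (by linarith)
  suffices 0 < √z * Gamma (1 / 4 + z) * cos φ ^ 2 + Gamma (3 / 4 + z) * sin φ ^ 2 by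
    refine (div_pos this pi_pos).trans_eq ?_
    ring
  rcases hz.eq_or_lt with rfl | hz
  · have hsin : sin φ ≠ 0 := by
      simp only [φ, mul_zero, zero_sub, sin_neg, neg_ne_zero]
      exact (sin_pos_of_pos_of_lt_pi (by positivity) (by linarith [pi_pos])).ne'
    simp only [sqrt_zero, zero_mul, zero_add]
    positivity
  · rcases eq_or_ne (cos φ) 0 with hcos | hcos
    · have hsin : sin φ ^ 2 = 1 := by nlinarith [sin_sq_add_cos_sq φ]
      simp [hcos, hsin, hB]
    · positivity

theorem IsPreconnected.forall_mem_Ioo_of_cos_pos {X : Type*} [TopologicalSpace X] {s : Set X}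
    (hs : IsPreconnected s) {g : X → ℝ} (hg : ContinuousOn g s) {a : X} (ha : a ∈ s)
    (hga : g a ∈ Ioo (-(π / 2)) (π / 2)) (hcos : ∀ x ∈ s, 0 < cos (g x)) :
    ∀ x ∈ s, g x ∈ Ioo (-(π / 2)) (π / 2) := by
  intro x hx
  by_contra hout
  rw [mem_Ioo, not_and_or, not_lt, not_lt] at hout
  rcases hout with hlow | hhigh
  · obtain ⟨y, hy, hgy⟩ := hs.intermediate_value hx ha hg ⟨hlow, hga.1.le⟩
    simpa [hgy] using hcos y hy
  · obtain ⟨y, hy, hgy⟩ := hs.intermediate_value ha hx hg ⟨hga.2.le, hhigh⟩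
    simpa [hgy] using hcos y hy

theorem theta_sub_phase_mem_Ioo {θ : ℝ → ℝ} (hθc : ContinuousOn θ (Ici 0)) (hθ0 : θ 0 = -(π / 2))
    (hθ : ∀ z ≥ (0 : ℝ), ∃ r > (0 : ℝ),
      r * cos (θ z) = √z * (Gamma (3 / 4 - z))⁻¹ ∧ r * sin (θ z) = -(Gamma (1 / 4 - z))⁻¹) :
    ∀ z ≥ (0 : ℝ), θ z - (π * z - π / 4) ∈ Ioo (-(π / 2)) (π / 2) := by
  refine isPreconnected_Ici.forall_mem_Ioo_of_cos_pos
    (hθc.sub (by fun_prop)) (self_mem_Ici (a := 0)) ?_ fun z hz => ?_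
  · rw [hθ0, mem_Ioo]
    constructor <;> linarith [pi_pos]
  · obtain ⟨r, hr, hcos, hsin⟩ := hθ z hz
    exact cos_sub_pos_of_polar hr hcos hsin (inner_phase_pos hz)

theorem action_mem_Ioo_of_quantization {θ : ℝ → ℝ}
    (hθ : ∀ z ≥ (0 : ℝ), θ z - (π * z - π / 4) ∈ Ioo (-(π / 2)) (π / 2))
    {K ħ ωm ωp E : ℝ} (n : ℝ) (hħ : 0 < ħ) (hωm : 0 < ωm) (hωp : 0 < ωp) (hE : 0 ≤ E)
    (hquant : K * √E / ħ + θ (E / (2 * ħ * ωm)) + θ (E / (2 * ħ * ωp)) = π * n) :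
    2 * K * √E + (π / ωm + π / ωp) * E
      ∈ Ioo (2 * π * ħ * (n - 1 / 2)) (2 * π * ħ * (n + 3 / 2)) := by
  set zm := E / (2 * ħ * ωm) with hzm
  set zp := E / (2 * ħ * ωp) with hzp
  obtain ⟨hm₁, hm₂⟩ := hθ zm (by positivity)
  obtain ⟨hp₁, hp₂⟩ := hθ zp (by positivity)
  have haction : 2 * K * √E + (π / ωm + π / ωp) * E
      = 2 * ħ * (π * n + (π * zm - θ zm) + (π * zp - θ zp)) := by
    rw [← hquant, hzm, hzp]
    field_simp
    ring
  rw [haction, mem_Ioo]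
  constructor <;> nlinarith

theorem stmt2
    (m ℓ ωm ωp : ℝ) (hℓ : 0 ≤ ℓ) (hωm : 0 < ωm) (hωp : 0 < ωp)
    (θ : ℝ → ℝ)
    (hθc : ContinuousOn θ (Ici 0)) (hθ0 : θ 0 = -(π/2))
    (hθ : ∀ z ≥ (0:ℝ), ∃ r > (0:ℝ),
      r * Real.cos (θ z) = Real.sqrt z * (Real.Gamma (3/4 - z))⁻¹ ∧
      r * Real.sin (θ z) = -(Real.Gamma (1/4 - z))⁻¹)
    (Eeig : ℝ → ℕ → ℝ)
    (hEeig : ∀ hb > (0:ℝ), ∀ n : ℕ, 0 < Eeig hb n ∧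
      Real.sqrt (2*m) * ℓ * Real.sqrt (Eeig hb n) / hb
        + θ (Eeig hb n / (2*hb*ωm)) + θ (Eeig hb n / (2*hb*ωp)) = π * n)
    (calE : ℝ → ℕ → ℝ)
    (hcalE : ∀ hb > (0:ℝ), ∀ n : ℕ, 0 ≤ calE hb n ∧
      2 * Real.sqrt (2*m) * ℓ * Real.sqrt (calE hb n) + (π/ωm + π/ωp) * calE hb n
        = 2*π*hb*(n + 1/2)) :
    ∀ hb > (0:ℝ), ∀ n : ℕ, 1 ≤ n →
      calE hb (n-1) < Eeig hb n ∧ Eeig hb n < calE hb (n+1) := by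
  intro hb hhb n hn
  obtain ⟨hEpos, hquant⟩ := hEeig hb hhb n
  have hS := action_mem_Ioo_of_quantization (theta_sub_phase_mem_Ioo hθc hθ0 hθ) n hhb hωm hωp
    hEpos.le hquant
  have hmono : Monotone fun E => 2 * √(2 * m) * ℓ * √E + (π / ωm + π / ωp) * E :=
    (sqrt_monotone.const_mul (by positivity)).add (monotone_id.const_mul (by positivity))
  have hlow := (hcalE hb hhb (n - 1)).2
  have hhigh := (hcalE hb hhb (n + 1)).2
  rw [Nat.cast_sub hn] at hlow
  push_cast at hlow hhigh
  exact ⟨hmono.reflect_lt (by linarith [hS.1]), hmono.reflect_lt (by linarith [hS.2])⟩
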